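/- Let f : X → X be a pointwise periodic homeomorphism of a compact metric space, A ∈ 2^X, and let M be a minimal set of 2^f contained in ω_{2^f}(A). Then ω_{2^f}(A) is finite if and only if M is finite. -/

import Mathlib

open TopologicalSpace Metric Set Filter

/-- The induced map on the hyperspace of nonempty compact (= closed) subsets. -/
noncomputable def hyper {X : Type*} [MetricSpace X] (f : X ≃ₜ X) :
    NonemptyCompacts X → NonemptyCompacts X :=
  fun A => ⟨⟨f '' A, A.isCompact.image f.continuous⟩, A.nonempty.image f⟩

/-- `x` is uniformly recurrent for `g`. -/
def IsUnifRec {α : Type*} [MetricSpace α] (g : α → α) (x : α) : Prop :=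
  ∀ ε > (0:ℝ), ∃ N > 0, ∀ k : ℕ, dist (g^[k * N] x) x < ε

/-- `x` is recurrent for `g` (it belongs to its own ω-limit set). -/
def IsRec {α : Type*} [MetricSpace α] (g : α → α) (x : α) : Prop :=
  ∀ ε > (0:ℝ), ∀ m : ℕ, ∃ n ≥ m, 0 < n ∧ dist (g^[n] x) x < ε

/-- `x` is almost periodic for `g`. -/
def IsAP {α : Type*} [MetricSpace α] (g : α → α) (x : α) : Prop :=
  ∀ ε > (0:ℝ), ∃ N : ℕ, ∀ n : ℕ, ∃ i < N, dist (g^[n + i] x) x < ε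

/-- `(x, y)` is an asymptotic pair for `g`. -/
def Asymp {α : Type*} [MetricSpace α] (g : α → α) (x y : α) : Prop :=
  Filter.Tendsto (fun n => dist (g^[n] x) (g^[n] y)) Filter.atTop (nhds 0)

/-- `(x, y)` is a proximal pair for `g`. -/
def Proximal {α : Type*} [MetricSpace α] (g : α → α) (x y : α) : Prop :=
  ∀ ε > (0:ℝ), ∀ m : ℕ, ∃ n ≥ m, dist (g^[n] x) (g^[n] y) < ε

/-- The ω-limit set of `x` under `g`. -/
def omegaSet {α : Type*} [MetricSpace α] (g : α → α) (x : α) : Set α :=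
  {y | ∀ ε > (0:ℝ), ∀ m : ℕ, ∃ n ≥ m, dist (g^[n] x) y < ε}

/-- `M` is a minimal set of `g`. -/
def IsMinimalFor {α : Type*} [TopologicalSpace α] (g : α → α) (M : Set α) : Prop :=
  M.Nonempty ∧ IsClosed M ∧ Set.MapsTo g M M ∧
    ∀ M' ⊆ M, M'.Nonempty → IsClosed M' → Set.MapsTo g M' M' → M' = M

/-- `A` is internally chain transitive for `g`. -/
def ICT {α : Type*} [MetricSpace α] (g : α → α) (A : Set α) : Prop :=
  ∀ a ∈ A, ∀ b ∈ A, ∀ ε > (0:ℝ), ∃ N : ℕ, 1 ≤ N ∧ ∃ c : ℕ → α,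
    c 0 = a ∧ c N = b ∧ (∀ i ≤ N, c i ∈ A) ∧ ∀ i < N, dist (g (c i)) (c (i + 1)) < ε

/-! If `M` is finite it contains a periodic point `B` of `2^f`, of period `p` say, and sorting
the return times of `A` to `B` by their residues mod `p` shows that some iterate `B'` of `B` is an
ω-limit point of `A` under `(2^f)^p`, which fixes `B'`. Then `A = B'`. Each `a ∈ A` is fixed by
some `f^(pc)`, and the `(2^f)^(pc)`-iterates of `A` contain `a` and accumulate at `B'`, so `A ⊆ B'`.
Conversely, by Baire's theorem the points of `B'` near which `B'` consists of `f^m`-fixed points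
for a single `m` are dense in `B'`; near such a point every point of an iterate `f^(pmn) A ⊆ B'` is
fixed by `f^(pmn)`, hence lies in `A` by injectivity, so `B' ⊆ A`. Thus `A` is periodic and its
ω-limit set lies in its finite orbit. -/

open Function

section OmegaLimit

variable {α : Type*} [MetricSpace α] {g : α → α} {x y : α}

theorem mem_omegaSet_iff : y ∈ omegaSet g x ↔ MapClusterPt y atTop (fun n => g^[n] x) := by
  simp [Metric.nhds_basis_ball.mapClusterPt_iff_frequently, omegaSet, frequently_atTop]

theorem omegaSet_subset_of_isClosed {C : Set α} (hC : IsClosed C) (h : ∀ n, g^[n] x ∈ C) :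
    omegaSet g x ⊆ C := fun _ hy =>
  hC.mem_of_mapClusterPt (mem_omegaSet_iff.1 hy) (Eventually.of_forall h)

theorem Function.IsPeriodicPt.finite_omegaSet {p : ℕ} (hx : IsPeriodicPt g p x) (hp : 0 < p) :
    (omegaSet g x).Finite := by
  have hfin : (range fun n => g^[n] x).Finite :=
    ((finite_Iio p).image fun n => g^[n] x).subset <| by
      rintro _ ⟨n, rfl⟩
      exact ⟨n % p, Nat.mod_lt n hp, hx.iterate_mod_apply n⟩
  exact hfin.subset (omegaSet_subset_of_isClosed hfin.isClosed fun n => mem_range_self n)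

theorem MapClusterPt.exists_mapClusterPt_mul_add {β : Type*} [TopologicalSpace β]
    [FirstCountableTopology β] {u : ℕ → β} {z : β} (h : MapClusterPt z atTop u) {s : ℕ}
    (hs : 0 < s) : ∃ r < s, MapClusterPt z atTop fun q => u (s * q + r) := by
  obtain ⟨ψ, hψ, hlim⟩ := h.tendsto_subseq
  obtain ⟨r, hr, hfreq⟩ : ∃ r ∈ Iio s, ∃ᶠ n in atTop, ψ n % s = r :=
    (finite_Iio s).frequently_exists.1 (Frequently.of_forall fun n => ⟨_, Nat.mod_lt _ hs, rfl⟩)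
  refine ⟨r, hr, mapClusterPt_iff_frequently.2 fun U hU => ?_⟩
  have hmod : ∃ᶠ m in atTop, m % s = r ∧ u m ∈ U :=
    hψ.tendsto_atTop.frequently (hfreq.and_eventually (hlim hU))
  refine (Nat.tendsto_div_const_atTop hs.ne').frequently (hmod.mono ?_)
  rintro m ⟨hm, hu⟩
  rwa [← hm, Nat.div_add_mod]

theorem exists_iterate_mem_omegaSet_iterate (hg : Continuous g) (hy : y ∈ omegaSet g x) {s : ℕ}
    (hs : 0 < s) : ∃ k, g^[k] y ∈ omegaSet g^[s] x := by
  obtain ⟨r, hr, hclust⟩ := (mem_omegaSet_iff.1 hy).exists_mapClusterPt_mul_add hs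
  refine ⟨s - r, mem_omegaSet_iff.2 (MapClusterPt.of_comp (tendsto_add_atTop_nat 1) ?_)⟩
  convert hclust.continuousAt_comp (hg.iterate (s - r)).continuousAt using 1
  funext q
  rw [comp_apply, comp_apply, ← iterate_add_apply, ← iterate_mul, mul_add_one]
  congr 1
  omega

theorem Function.IsFixedPt.mem_omegaSet_iterate (hg : Continuous g) (hy : y ∈ omegaSet g x)
    (hfix : IsFixedPt g y) {s : ℕ} (hs : 0 < s) : y ∈ omegaSet g^[s] x := by
  obtain ⟨k, hk⟩ := exists_iterate_mem_omegaSet_iterate hg hy hs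
  rwa [(hfix.iterate k).eq] at hk

end OmegaLimit

theorem Set.Finite.exists_isPeriodicPt_of_mapsTo {α : Type*} {g : α → α} {s : Set α}
    (hs : s.Finite) (hg : MapsTo g s s) (hne : s.Nonempty) :
    ∃ y ∈ s, ∃ p > 0, IsPeriodicPt g p y := by
  obtain ⟨x, hx⟩ := hne
  obtain ⟨i, j, hij, heq⟩ :=
    Finite.exists_lt_map_eq_of_forall_mem (f := fun n : ℕ => g^[n] x) (fun n => hg.iterate n hx) hs
  refine ⟨g^[i] x, hg.iterate i hx, j - i, Nat.sub_pos_of_lt hij, ?_⟩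
  rw [IsPeriodicPt, IsFixedPt, ← iterate_add_apply, Nat.sub_add_cancel hij.le]
  exact heq.symm

theorem IsCompact.subset_closure_locally_isPeriodicPt {X : Type*} [MetricSpace X] {g : X → X}
    (hg : Continuous g) (hper : ∀ x, ∃ n > 0, IsPeriodicPt g n x) {K : Set X} (hK : IsCompact K) :
    K ⊆ closure {c ∈ K | ∃ m > 0, ∃ r > 0, ∀ x ∈ K, dist x c < r → IsPeriodicPt g m x} := by
  have := isCompact_iff_compactSpace.1 hK
  let S : ℕ → Set K := fun m => {x | IsPeriodicPt g (m + 1) x}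
  have hS : ∀ m, IsClosed (S m) := fun m =>
    isClosed_eq ((hg.iterate (m + 1)).comp continuous_subtype_val) continuous_subtype_val
  have hcover : ⋃ m, S m = univ := eq_univ_of_forall fun x => by
    obtain ⟨n, hn, hx⟩ := hper x
    exact mem_iUnion.2 ⟨n - 1, by simpa [S, Nat.sub_add_cancel hn] using hx⟩
  refine (Subtype.dense_iff.1 (dense_iUnion_interior_of_closed hS hcover)).trans (closure_mono ?_)
  rintro _ ⟨c, hc, rfl⟩
  obtain ⟨m, hm⟩ := mem_iUnion.1 hc
  obtain ⟨r, hr, hball⟩ := Metric.mem_nhds_iff.1 (mem_interior_iff_mem_nhds.1 hm)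
  exact ⟨c.2, m + 1, m.succ_pos, r, hr, fun x hx hxc =>
    hball (show (⟨x, hx⟩ : K) ∈ ball c r from hxc)⟩

section Hyperspace

variable {X : Type*} [MetricSpace X] (f : X ≃ₜ X)

theorem coe_hyper_iterate (n : ℕ) (A : NonemptyCompacts X) :
    ((hyper f)^[n] A : Set X) = f^[n] '' A := by
  induction n with
  | zero => simp
  | succ n ih => rw [iterate_succ_apply', iterate_succ', image_comp, ← ih]; rfl

theorem continuous_hyper : Continuous (hyper f) :=
  f.continuous.nonemptyCompacts_map

theorem mem_of_isPeriodicPt_of_mem_omegaSet_hyper_iterate {A B : NonemptyCompacts X} {q : ℕ}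
    (hB : B ∈ omegaSet (hyper f)^[q] A) {a : X} (ha : a ∈ A) (haq : IsPeriodicPt f q a) :
    a ∈ B := by
  have hC : IsClosed {K : NonemptyCompacts X | ((K : Set X) ∩ {a}).Nonempty} :=
    NonemptyCompacts.isClosed_inter_nonempty_of_isClosed isClosed_singleton
  refine inter_singleton_nonempty.1 (omegaSet_subset_of_isClosed hC (fun n => ?_) hB)
  refine inter_singleton_nonempty.2 ?_
  rw [← iterate_mul, coe_hyper_iterate]
  exact ⟨a, ha, (haq.mul_const n).eq⟩

theorem mem_of_locally_isPeriodicPt_of_mem_omegaSet_hyper_iterate {A B : NonemptyCompacts X}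
    {q : ℕ} (hB : B ∈ omegaSet (hyper f)^[q] A) (hAB : (A : Set X) ⊆ B)
    (hBq : IsPeriodicPt (hyper f) q B) {b : X} (hb : b ∈ B) {r : ℝ} (hr : 0 < r)
    (hloc : ∀ x ∈ (B : Set X), dist x b < r → IsPeriodicPt f q x) : b ∈ A := by
  have hC : IsClosed {K : NonemptyCompacts X | (K : Set X) ⊆ A ∪ (ball b r)ᶜ} :=
    NonemptyCompacts.isClosed_subsets_of_isClosed
      (A.isCompact.isClosed.union isOpen_ball.isClosed_compl)
  refine (omegaSet_subset_of_isClosed hC (fun n => ?_) hB hb).resolve_right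
    (not_not.2 (mem_ball_self hr))
  rw [mem_ofPred_eq, ← iterate_mul, coe_hyper_iterate]
  rintro _ ⟨a, ha, rfl⟩
  refine or_iff_not_imp_right.2 fun hnear => ?_
  have hxB : f^[q * n] a ∈ (B : Set X) := by
    rw [← (hBq.mul_const n).eq, coe_hyper_iterate]
    exact mem_image_of_mem _ (hAB ha)
  -- `f^[q * n]` fixes `f^[q * n] a`, so by injectivity it is `a` itself
  have hfix : f^[q * n] (f^[q * n] a) = f^[q * n] a :=
    (hloc _ hxB (not_not.1 hnear)).mul_const n
  rwa [(f.injective.iterate (q * n)) hfix]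

theorem eq_of_mem_omegaSet_hyper_iterate (hper : ∀ x, ∃ n > 0, IsPeriodicPt f n x)
    {A B : NonemptyCompacts X} {p : ℕ} (hBp : IsPeriodicPt (hyper f) p B)
    (hB : B ∈ omegaSet (hyper f)^[p] A) : A = B := by
  have hB' : ∀ c > 0, B ∈ omegaSet (hyper f)^[p * c] A := fun c hc => by
    rw [iterate_mul]
    exact hBp.isFixedPt.mem_omegaSet_iterate ((continuous_hyper f).iterate p) hB hc
  have hAB : (A : Set X) ⊆ B := fun a ha => by
    obtain ⟨s, hs, has⟩ := hper a
    exact mem_of_isPeriodicPt_of_mem_omegaSet_hyper_iterate f (hB' s hs) ha (has.const_mul p)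
  refine NonemptyCompacts.ext (hAB.antisymm ?_)
  refine (B.isCompact.subset_closure_locally_isPeriodicPt f.continuous hper).trans
    (closure_minimal ?_ A.isCompact.isClosed)
  rintro c ⟨hc, m, hm, r, hr, hloc⟩
  exact mem_of_locally_isPeriodicPt_of_mem_omegaSet_hyper_iterate f (hB' m hm) hAB
    (hBp.mul_const m) hc hr fun x hx hxc => (hloc x hx hxc).const_mul p

end Hyperspace

theorem stmt16_general {X : Type*} [MetricSpace X]
    (f : X ≃ₜ X) (hper : ∀ x : X, ∃ n > 0, (⇑f)^[n] x = x)
    (A : NonemptyCompacts X) (M : Set (NonemptyCompacts X))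
    (hM : IsMinimalFor (hyper f) M) (hsub : M ⊆ omegaSet (hyper f) A) :
    (omegaSet (hyper f) A).Finite ↔ M.Finite := by
  refine ⟨fun h => h.subset hsub, fun hMfin => ?_⟩
  obtain ⟨B, hBM, p, hp, hBp⟩ := hMfin.exists_isPeriodicPt_of_mapsTo hM.2.2.1 hM.1
  obtain ⟨k, hk⟩ := exists_iterate_mem_omegaSet_iterate (continuous_hyper f) (hsub hBM) hp
  have hA : A = (hyper f)^[k] B :=
    eq_of_mem_omegaSet_hyper_iterate f hper (hBp.apply_iterate k) hk
  have hAp : IsPeriodicPt (hyper f) p A := hA ▸ hBp.apply_iterate k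
  exact hAp.finite_omegaSet hp

theorem stmt16 {X : Type*} [MetricSpace X] [CompactSpace X]
    (f : X ≃ₜ X) (hper : ∀ x : X, ∃ n > 0, (⇑f)^[n] x = x)
    (A : NonemptyCompacts X) (M : Set (NonemptyCompacts X))
    (hM : IsMinimalFor (hyper f) M) (hsub : M ⊆ omegaSet (hyper f) A) :
    (omegaSet (hyper f) A).Finite ↔ M.Finite :=
  stmt16_general f hper A M hM hsub
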